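/- arXiv:1111.5480 — 4 statements merged into one kernel-verified Lean document; each statement's English description precedes it below -/
import Mathlib

section
/- Let U ⊆ ℝ² be open and let u : ℝ² → ℝ be C² on U with u_y ≠ 0 at every point of U. Suppose u satisfies the flux equation u_y²·u_xx − 2·u_x·u_y·u_xy + u_x²·u_yy = 0 on U. Then the function w = u_x/u_y is differentiable on U and satisfies the gas dynamics equation w_x = w·w_y at every point of U. -/
/-- Partial derivative of `u : ℝ × ℝ → ℝ` in the first coordinate direction. -/
noncomputable def pdx (u : ℝ × ℝ → ℝ) (p : ℝ × ℝ) : ℝ := fderiv ℝ u p (1, 0)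

/-- Partial derivative of `u : ℝ × ℝ → ℝ` in the second coordinate direction. -/
noncomputable def pdy (u : ℝ × ℝ → ℝ) (p : ℝ × ℝ) : ℝ := fderiv ℝ u p (0, 1)

/-!
Write `a = u_x`, `b = u_y` and `w = a / b`. By the quotient rule
`b³ (w_x - w w_y) = b² a_x - a b (b_x + a_y) + a² b_y`, and since `b_x = u_yx = u_xy = a_y` by
symmetry of second derivatives, the right-hand side is exactly the flux expression.
-/

section DirectionalDerivatives

variable {𝕜 E F : Type*} [NontriviallyNormedField 𝕜] [NormedAddCommGroup E] [NormedSpace 𝕜 E]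
  [NormedAddCommGroup F] [NormedSpace 𝕜 F]

theorem ContDiffAt.differentiableAt_fderiv_apply {f : E → F} {x : E} {n : WithTop ℕ∞}
    (hf : ContDiffAt 𝕜 n f x) (hn : 2 ≤ n) (v : E) :
    DifferentiableAt 𝕜 (fun y => fderiv 𝕜 f y v) x :=
  ((hf.fderiv_right (m := 1) hn).differentiableAt one_ne_zero).clm_apply
    (differentiableAt_const v)

theorem ContDiffAt.fderiv_fderiv_apply_comm {f : E → F} {x : E} {n : WithTop ℕ∞}
    (hf : ContDiffAt 𝕜 n f x) (hn : minSmoothness 𝕜 2 ≤ n) (v w : E) :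
    fderiv 𝕜 (fun y => fderiv 𝕜 f y v) x w = fderiv 𝕜 (fun y => fderiv 𝕜 f y w) x v := by
  have hf' : DifferentiableAt 𝕜 (fderiv 𝕜 f) x :=
    (hf.fderiv_right (m := 1) (le_minSmoothness.trans hn)).differentiableAt one_ne_zero
  rw [fderiv_clm_apply hf' (differentiableAt_const v),
    fderiv_clm_apply hf' (differentiableAt_const w)]
  simpa using hf.isSymmSndFDerivAt hn w v

theorem HasFDerivAt.fun_div {f g : E → 𝕜} {f' g' : E →L[𝕜] 𝕜} {x : E} (hf : HasFDerivAt f f' x)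
    (hg : HasFDerivAt g g' x) (hx : g x ≠ 0) :
    HasFDerivAt (fun y => f y / g y) ((g x ^ 2)⁻¹ • (g x • f' - f x • g')) x := by
  have hinv : HasFDerivAt (fun y => (g y)⁻¹) (-(g x ^ 2)⁻¹ • g') x :=
    (hasDerivAt_inv hx).comp_hasFDerivAt x hg
  simp only [div_eq_mul_inv]
  refine (hf.fun_mul hinv).congr_fderiv ?_
  ext v
  simp only [add_apply, smul_apply, smul_eq_mul, neg_mul, mul_neg, sub_apply]
  field_simp
  ring

theorem fderiv_div_apply {f g : E → 𝕜} {x : E} (hf : DifferentiableAt 𝕜 f x)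
    (hg : DifferentiableAt 𝕜 g x) (hx : g x ≠ 0) (v : E) :
    fderiv 𝕜 (fun y => f y / g y) x v
      = (g x * fderiv 𝕜 f x v - f x * fderiv 𝕜 g x v) / g x ^ 2 := by
  rw [(hf.hasFDerivAt.fun_div hg.hasFDerivAt hx).fderiv]
  simp only [smul_apply, sub_apply, smul_eq_mul]
  ring

end DirectionalDerivatives

section PartialDerivatives

variable {u f g : ℝ × ℝ → ℝ} {p : ℝ × ℝ}

theorem ContDiffAt.differentiableAt_pdx (hu : ContDiffAt ℝ 2 u p) : DifferentiableAt ℝ (pdx u) p :=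
  hu.differentiableAt_fderiv_apply le_rfl _

theorem ContDiffAt.differentiableAt_pdy (hu : ContDiffAt ℝ 2 u p) : DifferentiableAt ℝ (pdy u) p :=
  hu.differentiableAt_fderiv_apply le_rfl _

theorem ContDiffAt.pdx_pdy_comm (hu : ContDiffAt ℝ 2 u p) : pdx (pdy u) p = pdy (pdx u) p :=
  hu.fderiv_fderiv_apply_comm (by simp [minSmoothness_of_isRCLikeNormedField]) _ _

theorem pdx_div (hf : DifferentiableAt ℝ f p) (hg : DifferentiableAt ℝ g p) (hp : g p ≠ 0) :
    pdx (fun q => f q / g q) p = (g p * pdx f p - f p * pdx g p) / g p ^ 2 :=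
  fderiv_div_apply hf hg hp _

theorem pdy_div (hf : DifferentiableAt ℝ f p) (hg : DifferentiableAt ℝ g p) (hp : g p ≠ 0) :
    pdy (fun q => f q / g q) p = (g p * pdy f p - f p * pdy g p) / g p ^ 2 :=
  fderiv_div_apply hf hg hp _

end PartialDerivatives

/-- if `u` is C² on an open set `U ⊆ ℝ²`, `u_y ≠ 0` on `U`, and `u`
satisfies the flux equation `u_y²·u_xx − 2·u_x·u_y·u_xy + u_x²·u_yy = 0` on `U`,
then `w = u_x/u_y` is differentiable on `U` and satisfies the gas dynamics
equation `w_x = w·w_y` on `U`. -/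
theorem flux_to_gas_dynamics (U : Set (ℝ × ℝ)) (hU : IsOpen U) (u : ℝ × ℝ → ℝ)
    (hu : ContDiffOn ℝ 2 u U)
    (huy : ∀ p ∈ U, pdy u p ≠ 0)
    (hflux : ∀ p ∈ U,
      (pdy u p) ^ 2 * pdx (pdx u) p
        - 2 * pdx u p * pdy u p * pdy (pdx u) p
        + (pdx u p) ^ 2 * pdy (pdy u) p = 0) :
    DifferentiableOn ℝ (fun p => pdx u p / pdy u p) U ∧
    ∀ p ∈ U,
      pdx (fun q => pdx u q / pdy u q) p
        = (pdx u p / pdy u p) * pdy (fun q => pdx u q / pdy u q) p := by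
  have hu2 : ∀ p ∈ U, ContDiffAt ℝ 2 u p := fun p hp => hu.contDiffAt (hU.mem_nhds hp)
  have hpdx : ∀ p ∈ U, DifferentiableAt ℝ (pdx u) p := fun p hp => (hu2 p hp).differentiableAt_pdx
  have hpdy : ∀ p ∈ U, DifferentiableAt ℝ (pdy u) p := fun p hp => (hu2 p hp).differentiableAt_pdy
  refine ⟨fun p hp => ?_, fun p hp => ?_⟩
  · exact ((hpdx p hp).hasFDerivAt.fun_div (hpdy p hp).hasFDerivAt
      (huy p hp)).differentiableAt.differentiableWithinAt
  · rw [pdx_div (hpdx p hp) (hpdy p hp) (huy p hp), pdy_div (hpdx p hp) (hpdy p hp) (huy p hp),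
      (hu2 p hp).pdx_pdy_comm]
    have := huy p hp
    field_simp
    linear_combination hflux p hp
end

section
/- Let U ⊆ ℝ² be open, let u : ℝ² → ℝ be C² on U, and let Φ : ℝ → ℝ be C². Set v = Φ ∘ u. Then at every point p ∈ U, v_y²·v_xx − 2·v_x·v_y·v_xy + v_x²·v_yy = (Φ'(u(p)))³ · (u_y²·u_xx − 2·u_x·u_y·u_xy + u_x²·u_yy) evaluated at p. In particular, the left-hand side of the flux equation is a relative invariant of the substitution u ↦ Φ(u), and the flux equation is invariant under such substitutions with Φ'∘u nonvanishing. -/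
/-- The left-hand side of the flux equation
`u_y²·u_xx − 2·u_x·u_y·u_xy + u_x²·u_yy`. -/
noncomputable def fluxLHS (u : ℝ × ℝ → ℝ) (p : ℝ × ℝ) : ℝ :=
  (pdy u p) ^ 2 * pdx (pdx u) p
    - 2 * pdx u p * pdy u p * pdy (pdx u) p
    + (pdx u p) ^ 2 * pdy (pdy u) p

/-!
By the chain rule `∇v = Φ'(u) ∇u` and `D²v = Φ''(u) ∇u ⊗ ∇u + Φ'(u) D²u`. The flux expression
of `u` is the quadratic form `D²u` evaluated at `∇u^⊥ = (u_y, -u_x)`, and `∇v^⊥ = Φ'(u) ∇u^⊥`.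
The term `Φ''(u) ∇u ⊗ ∇u` contributes `Φ''(u) ⟨∇u, ∇u^⊥⟩² = 0`, leaving `Φ'(u)³` times the
flux expression of `u`.
-/

section ChainRule

variable {E : Type*} [NormedAddCommGroup E] [NormedSpace ℝ E] {u : E → ℝ} {Φ : ℝ → ℝ} {p : E}

theorem fderiv_comp_apply_eq_deriv_mul (hΦ : DifferentiableAt ℝ Φ (u p))
    (hu : DifferentiableAt ℝ u p) (w : E) :
    fderiv ℝ (Φ ∘ u) p w = deriv Φ (u p) * fderiv ℝ u p w :=
  congrArg (· w) (hΦ.hasDerivAt.comp_hasFDerivAt p hu.hasFDerivAt).fderiv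

theorem fderiv_fderiv_comp_apply (hu : ContDiffAt ℝ 2 u p) (hΦ : ContDiff ℝ 2 Φ) (v w : E) :
    fderiv ℝ (fun q ↦ fderiv ℝ (Φ ∘ u) q w) p v =
      deriv (deriv Φ) (u p) * fderiv ℝ u p v * fderiv ℝ u p w
        + deriv Φ (u p) * fderiv ℝ (fun q ↦ fderiv ℝ u q w) p v := by
  have hΦ' : ContDiff ℝ 1 (deriv Φ) :=
    ((contDiff_succ_iff_deriv (n := 1)).mp (by exact_mod_cast hΦ)).2.2
  have hud : DifferentiableAt ℝ u p := hu.differentiableAt (by norm_num)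
  have hΦ'u : DifferentiableAt ℝ (fun q ↦ deriv Φ (u q)) p :=
    (hΦ'.differentiable one_ne_zero (u p)).comp p hud
  have hDu : DifferentiableAt ℝ (fun q ↦ fderiv ℝ u q w) p :=
    ((hu.fderiv_right (m := 1) (by norm_num)).differentiableAt (by norm_num)).clm_apply
      (differentiableAt_const w)
  have first_deriv_near : (fun q ↦ fderiv ℝ (Φ ∘ u) q w)
      =ᶠ[nhds p] fun q ↦ deriv Φ (u q) * fderiv ℝ u q w := by
    filter_upwards [hu.eventually (by simp)] with q hq
    exact fderiv_comp_apply_eq_deriv_mul (hΦ.differentiable (by norm_num) (u q))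
      (hq.differentiableAt (by norm_num)) w
  rw [first_deriv_near.fderiv_eq, fderiv_fun_mul hΦ'u hDu]
  have hD_Φ'u : fderiv ℝ (fun q ↦ deriv Φ (u q)) p v = deriv (deriv Φ) (u p) * fderiv ℝ u p v :=
    fderiv_comp_apply_eq_deriv_mul (hΦ'.differentiable one_ne_zero (u p)) hud v
  simp only [add_apply, smul_apply, smul_eq_mul, hD_Φ'u]
  ring

end ChainRule

theorem fluxLHS_comp {u : ℝ × ℝ → ℝ} {Φ : ℝ → ℝ} {p : ℝ × ℝ} (hu : ContDiffAt ℝ 2 u p)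
    (hΦ : ContDiff ℝ 2 Φ) :
    fluxLHS (Φ ∘ u) p = deriv Φ (u p) ^ 3 * fluxLHS u p := by
  have hv := fderiv_comp_apply_eq_deriv_mul (hΦ.differentiable (by norm_num) (u p))
    (hu.differentiableAt (by norm_num))
  have hD2v := fderiv_fderiv_comp_apply hu hΦ
  unfold fluxLHS pdx pdy
  simp only [hv, hD2v]
  ring

/-- for `u` C² on an open `U ⊆ ℝ²` and `Φ : ℝ → ℝ` C², setting
`v = Φ ∘ u`, at every `p ∈ U` the flux expression of `v` equals `(Φ'(u(p)))³`
times the flux expression of `u`; in particular the flux expression is a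
relative invariant of `u ↦ Φ(u)` and the flux equation is invariant under such
substitutions with `Φ'∘u` nonvanishing on `U`. -/
theorem flux_relative_invariant (U : Set (ℝ × ℝ)) (hU : IsOpen U) (u : ℝ × ℝ → ℝ)
    (hu : ContDiffOn ℝ 2 u U) (Φ : ℝ → ℝ) (hΦ : ContDiff ℝ 2 Φ) :
    (∀ p ∈ U, fluxLHS (Φ ∘ u) p = (deriv Φ (u p)) ^ 3 * fluxLHS u p) ∧
    ((∀ p ∈ U, deriv Φ (u p) ≠ 0) →
      ((∀ p ∈ U, fluxLHS u p = 0) ↔ (∀ p ∈ U, fluxLHS (Φ ∘ u) p = 0))) := by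
  have key : ∀ p ∈ U, fluxLHS (Φ ∘ u) p = deriv Φ (u p) ^ 3 * fluxLHS u p :=
    fun p hp ↦ fluxLHS_comp (hu.contDiffAt (hU.mem_nhds hp)) hΦ
  refine ⟨key, fun hΦ'u ↦ forall₂_congr fun p hp ↦ ?_⟩
  rw [key p hp, mul_eq_zero, or_iff_right (pow_ne_zero 3 (hΦ'u p hp))]
end

section
/- Let t, p, q ∈ ℝ and suppose c := p·sin t + cos t > 0. Set p' = (p·cos t − sin t)/c and q' = q/c³. Then q'/(1 + p'²)^{3/2} = q/(1 + p²)^{3/2} (real powers). That is, the classical curvature K = y₂/(1+y₁²)^{3/2} is invariant under the lifted rotation action on the branch where c > 0. -/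
open Real

/-! A rotation of the plane preserves `1 + y₁²` up to the factor `c²`, i.e.
`1 + y₁'² = (1 + y₁²) / c²`, so `(1 + y₁'²)^{3/2} = (1 + y₁²)^{3/2} / c³` on the branch `c > 0`;
this is exactly the factor `c³` by which `y₂` is divided. -/

theorem rotated_slope_sq_add_sq (p t : ℝ) :
    (p * cos t - sin t) ^ 2 + (p * sin t + cos t) ^ 2 = 1 + p ^ 2 := by
  linear_combination (1 + p ^ 2) * sin_sq_add_cos_sq t

theorem one_add_rotated_slope_sq {p t : ℝ} (hc : p * sin t + cos t ≠ 0) :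
    1 + ((p * cos t - sin t) / (p * sin t + cos t)) ^ 2 = (1 + p ^ 2) / (p * sin t + cos t) ^ 2 := by
  rw [← rotated_slope_sq_add_sq p t]
  field_simp
  ring

theorem div_sq_rpow_three_halves {a c : ℝ} (ha : 0 ≤ a) (hc : 0 ≤ c) :
    (a / c ^ 2) ^ ((3 : ℝ) / 2) = a ^ ((3 : ℝ) / 2) / c ^ 3 := by
  rw [div_rpow ha (sq_nonneg c), ← rpow_natCast c 2, ← rpow_mul hc]
  norm_num

/-- the classical curvature `K = y₂/(1+y₁²)^{3/2}` is invariant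
under the lifted rotation action `(y₁, y₂) ↦ ((y₁·cos t − sin t)/c, y₂/c³)`,
`c = y₁·sin t + cos t`, on the branch where `c > 0`. -/
theorem curvature_rotation_invariant_on_branch (t p q : ℝ)
    (hc : p * Real.sin t + Real.cos t > 0) :
    (q / (p * Real.sin t + Real.cos t) ^ 3) /
      (1 + ((p * Real.cos t - Real.sin t) / (p * Real.sin t + Real.cos t)) ^ 2)
        ^ ((3 : ℝ) / 2)
      = q / (1 + p ^ 2) ^ ((3 : ℝ) / 2) := by
  rw [one_add_rotated_slope_sq hc.ne', div_sq_rpow_three_halves (by positivity) hc.le,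
    div_div_div_cancel_right₀ (pow_pos hc 3).ne']
end

section
/- Let I ⊆ ℝ be an open interval and y : ℝ → ℝ be five times continuously differentiable on I with y''(x) > 0 for all x ∈ I. Suppose y satisfies the Monge equation y⁽⁵⁾(x)·y''(x)² − 5·y''(x)·y'''(x)·y⁽⁴⁾(x) + (40/9)·y'''(x)³ = 0 on I. Then the function x ↦ (3·y''(x)·y⁽⁴⁾(x) − 5·y'''(x)²)·(y''(x))^{−8/3} has derivative zero at every point of I, and hence is constant on I. That is, j₁ = (3y₂y₄ − 5y₃²)/y₂^{8/3} is a first integral of the Monge equation. -/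
/-!
Differentiating `j₁ = (3y₂y₄ − 5y₃²)·y₂^{−8/3}` with `y₂' = y₃`, `y₃' = y₄`, `y₄' = y₅` gives
`j₁' = 3·(y₅y₂² − 5y₂y₃y₄ + (40/9)y₃³)·y₂^{−11/3}`, i.e. three times the Monge expression times a
power of `y₂`; so `j₁' = 0` along solutions, and `j₁` is constant on the (connected) interval.
-/

open Set

theorem ContDiffOn.hasDerivAt_iteratedDeriv {𝕜 F : Type*} [NontriviallyNormedField 𝕜]
    [NormedAddCommGroup F] [NormedSpace 𝕜 F] {f : 𝕜 → F} {s : Set 𝕜} {n : WithTop ℕ∞}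
    (hf : ContDiffOn 𝕜 n f s) (hs : IsOpen s) {k : ℕ} (hk : k < n) {x : 𝕜} (hx : x ∈ s) :
    HasDerivAt (iteratedDeriv k f) (iteratedDeriv (k + 1) f x) x := by
  have hdiff : DifferentiableOn 𝕜 (iteratedDeriv k f) s :=
    (hf.differentiableOn_iteratedDerivWithin hk hs.uniqueDiffOn).congr
      (iteratedDerivWithin_of_isOpen hs).symm
  rw [iteratedDeriv_succ]
  exact ((hdiff x hx).differentiableAt (hs.mem_nhds hx)).hasDerivAt

noncomputable def mongeFirstIntegral (y₂ y₃ y₄ : ℝ) : ℝ :=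
  (3 * y₂ * y₄ - 5 * y₃ ^ 2) * y₂ ^ (-(8 : ℝ) / 3)

noncomputable def mongeExpr (y₂ y₃ y₄ y₅ : ℝ) : ℝ :=
  y₅ * y₂ ^ 2 - 5 * y₂ * y₃ * y₄ + (40 / 9) * y₃ ^ 3

theorem hasDerivAt_mongeFirstIntegral {p q r : ℝ → ℝ} {s x : ℝ}
    (hp : HasDerivAt p (q x) x) (hq : HasDerivAt q (r x) x) (hr : HasDerivAt r s x)
    (hpx : p x ≠ 0) :
    HasDerivAt (fun t => mongeFirstIntegral (p t) (q t) (r t))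
      (3 * mongeExpr (p x) (q x) (r x) s * p x ^ (-(11 : ℝ) / 3)) x := by
  have hsplit : p x ^ (-(8 : ℝ) / 3) = p x ^ (-(11 : ℝ) / 3) * p x := by
    rw [← Real.rpow_add_one hpx]; norm_num
  refine ((((hp.const_mul 3).mul hr).sub ((hq.pow 2).const_mul 5)).mul
    (hp.rpow_const (p := -(8 : ℝ) / 3) (Or.inl hpx))).congr_deriv ?_
  rw [hsplit, show -(8 : ℝ) / 3 - 1 = -(11 : ℝ) / 3 by norm_num, mongeExpr]
  simp only [Pi.mul_apply, Pi.sub_apply, Pi.pow_apply]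
  ring

/-- on an open interval where `y` is C⁵ with `y'' > 0` and solves
the Monge equation `y⁽⁵⁾·y''² − 5·y''·y'''·y⁽⁴⁾ + (40/9)·y'''³ = 0`, the
function `j₁ = (3y₂y₄ − 5y₃²)·y₂^{−8/3}` has zero derivative at every point of
the interval and hence is constant on it: `j₁` is a first integral of the
Monge equation. -/
theorem monge_first_integral (a b : ℝ) (y : ℝ → ℝ)
    (hy : ContDiffOn ℝ 5 y (Set.Ioo a b))
    (hpos : ∀ x ∈ Set.Ioo a b, 0 < iteratedDeriv 2 y x)
    (hmonge : ∀ x ∈ Set.Ioo a b,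
      iteratedDeriv 5 y x * (iteratedDeriv 2 y x) ^ 2
        - 5 * iteratedDeriv 2 y x * iteratedDeriv 3 y x * iteratedDeriv 4 y x
        + (40 / 9) * (iteratedDeriv 3 y x) ^ 3 = 0) :
    (∀ x ∈ Set.Ioo a b,
      deriv (fun x =>
        (3 * iteratedDeriv 2 y x * iteratedDeriv 4 y x
            - 5 * (iteratedDeriv 3 y x) ^ 2) *
          (iteratedDeriv 2 y x) ^ (-(8 : ℝ) / 3)) x = 0) ∧
    (∀ x₁ ∈ Set.Ioo a b, ∀ x₂ ∈ Set.Ioo a b,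
      (3 * iteratedDeriv 2 y x₁ * iteratedDeriv 4 y x₁
          - 5 * (iteratedDeriv 3 y x₁) ^ 2) *
        (iteratedDeriv 2 y x₁) ^ (-(8 : ℝ) / 3)
      = (3 * iteratedDeriv 2 y x₂ * iteratedDeriv 4 y x₂
          - 5 * (iteratedDeriv 3 y x₂) ^ 2) *
        (iteratedDeriv 2 y x₂) ^ (-(8 : ℝ) / 3)) := by
  have hj : ∀ x ∈ Ioo a b, HasDerivAt (fun t => mongeFirstIntegral (iteratedDeriv 2 y t)
      (iteratedDeriv 3 y t) (iteratedDeriv 4 y t)) 0 x := by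
    intro x hx
    have h := hasDerivAt_mongeFirstIntegral (hy.hasDerivAt_iteratedDeriv isOpen_Ioo (k := 2)
      (by norm_num) hx) (hy.hasDerivAt_iteratedDeriv isOpen_Ioo (k := 3) (by norm_num) hx)
      (hy.hasDerivAt_iteratedDeriv isOpen_Ioo (k := 4) (by norm_num) hx) (hpos x hx).ne'
    rwa [mongeExpr, hmonge x hx, mul_zero, zero_mul] at h
  refine ⟨fun x hx => (hj x hx).deriv, fun x₁ hx₁ x₂ hx₂ => ?_⟩
  exact isOpen_Ioo.is_const_of_deriv_eq_zero isPreconnected_Ioo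
    (fun x hx => (hj x hx).differentiableAt.differentiableWithinAt)
    (fun x hx => (hj x hx).deriv) hx₁ hx₂
end
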